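/- arXiv:1707.06613 — 3 statements merged into one kernel-verified Lean document; each statement's English description precedes it below -/
import Mathlib

section
/- Consider inputs x ∈ {0,1}^d, d ≥ 2, with group membership given by the last bit x_d and target y = x_{d-1} XOR x_d under the uniform distribution. There exist two affine functions c₁, c₂ (one per group) such that the decoupled classifier γ(x) = c_{x_d + 1}(x) achieves zero squared error, while every single affine function has squared error at least 1/4. Hence the cost of coupling of linear regression with squared loss is at least 1/4. -/
/-!
Put `s x = (-1)^(x i + x j)`, the ±1 character of the two bits, so that the target
`x i xor x j` equals `(1 - s) / 2`. Flipping bit `i` or bit `j` negates `s`, hence `s` is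
orthogonal (over the uniform distribution on the cube) to the constants and to every
coordinate `x k`, i.e. to every affine predictor. So the residual `f` of any affine
predictor has correlation `-1/2` with `s`, and Cauchy–Schwarz gives `E[f²] ≥ E[s f]² = 1/4`.
Once the group bit `x j` is fixed, on the other hand, the target is affine in `x i`.
-/

open Finset

variable {ι : Type*} [DecidableEq ι]

def flipBit (j : ι) (x : ι → Bool) : ι → Bool :=
  Function.update x j (!x j)

lemma flipBit_apply_self (j : ι) (x : ι → Bool) : flipBit j x j = !x j :=
  Function.update_self ..

lemma flipBit_apply_of_ne {j k : ι} (h : k ≠ j) (x : ι → Bool) : flipBit j x k = x k :=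
  Function.update_of_ne h ..

lemma flipBit_flipBit (j : ι) (x : ι → Bool) : flipBit j (flipBit j x) = x := by
  simp [flipBit]

lemma flipBit_ne_self (j : ι) (x : ι → Bool) : flipBit j x ≠ x :=
  fun h => by simpa [flipBit_apply_self] using congrFun h j

def xorSign (i j : ι) (x : ι → Bool) : ℝ :=
  if x i = x j then 1 else -1

variable {i j : ι}

lemma xorSign_flipBit (hij : i ≠ j) {k : ι} (hk : k = i ∨ k = j) (x : ι → Bool) :
    xorSign i j (flipBit k x) = -xorSign i j x := by
  rcases hk with rfl | rfl
  · rw [xorSign, xorSign, flipBit_apply_self, flipBit_apply_of_ne hij.symm]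
    cases x k <;> cases x j <;> norm_num
  · rw [xorSign, xorSign, flipBit_apply_self, flipBit_apply_of_ne hij]
    cases x i <;> cases x k <;> norm_num

variable [Fintype ι]

lemma sum_eq_zero_of_flipBit_eq_neg {M : Type*} [AddCommGroup M] (F : (ι → Bool) → M) (j : ι)
    (h : ∀ x, F (flipBit j x) = -F x) : ∑ x, F x = 0 :=
  sum_involution (fun x _ => flipBit j x) (fun x _ => by simp [h])
    (fun x _ _ => flipBit_ne_self j x) (fun _ _ => mem_univ _) (fun x _ => flipBit_flipBit j x)

lemma sum_xorSign (hij : i ≠ j) : ∑ x, xorSign i j x = 0 :=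
  sum_eq_zero_of_flipBit_eq_neg _ i (xorSign_flipBit hij (.inl rfl))

lemma sum_xorSign_mul_bit (hij : i ≠ j) (k : ι) :
    ∑ x : ι → Bool, xorSign i j x * (if x k then 1 else 0) = 0 := by
  -- flip whichever of the two bits `i`, `j` is not `k`
  obtain ⟨l, hl, hlk⟩ : ∃ l, (l = i ∨ l = j) ∧ k ≠ l := by
    by_cases hki : k = i
    · exact ⟨j, .inr rfl, hki ▸ hij⟩
    · exact ⟨i, .inl rfl, hki⟩
  refine sum_eq_zero_of_flipBit_eq_neg _ l fun x => ?_
  rw [xorSign_flipBit hij hl, flipBit_apply_of_ne hlk, neg_mul]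

lemma sum_xorSign_mul_affine (hij : i ≠ j) (w : ι → ℝ) (b : ℝ) :
    ∑ x : ι → Bool, xorSign i j x * (∑ k, w k * (if x k then 1 else 0) + b) = 0 := by
  have hexpand : ∀ x : ι → Bool, xorSign i j x * (∑ k, w k * (if x k then 1 else 0) + b)
      = ∑ k, w k * (xorSign i j x * (if x k then 1 else 0)) + b * xorSign i j x := by
    intro x
    rw [mul_add, mul_sum, mul_comm b]
    exact congrArg₂ _ (sum_congr rfl fun k _ => mul_left_comm ..) rfl
  rw [sum_congr rfl fun x _ => hexpand x, sum_add_distrib, sum_comm, ← mul_sum, sum_xorSign hij]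
  simp only [← mul_sum, sum_xorSign_mul_bit hij, mul_zero, sum_const_zero, add_zero]

lemma sum_xorSign_mul_xor (hij : i ≠ j) :
    ∑ x : ι → Bool, xorSign i j x * (if x i ≠ x j then 1 else 0) = -(2 ^ Fintype.card ι / 2) := by
  have hpoint : ∀ x : ι → Bool,
      xorSign i j x * (if x i ≠ x j then 1 else 0) = (xorSign i j x - 1) / 2 := by
    intro x
    by_cases h : x i = x j <;> norm_num [xorSign, h]
  rw [sum_congr rfl fun x _ => hpoint x, ← sum_div, sum_sub_distrib, sum_xorSign hij, sum_const,
    card_univ, Fintype.card_fun, Fintype.card_bool, nsmul_one]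
  push_cast
  ring

lemma sum_xorSign_sq (i j : ι) : ∑ x : ι → Bool, xorSign i j x ^ 2 = 2 ^ Fintype.card ι := by
  have hsq : ∀ x, xorSign i j x ^ 2 = 1 := fun x => by unfold xorSign; split_ifs <;> norm_num
  simp [hsq]

theorem exists_groupwise_affine_eq_xor (i j : ι) :
    ∃ (w₁ w₂ : ι → ℝ) (b₁ b₂ : ℝ), ∀ x : ι → Bool,
      (if x i ≠ x j then (1 : ℝ) else 0) =
        if x j then ∑ k, w₂ k * (if x k then (1 : ℝ) else 0) + b₂
        else ∑ k, w₁ k * (if x k then (1 : ℝ) else 0) + b₁ := by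
  -- on `x j = false` the target is `x i`, on `x j = true` it is `1 - x i`
  refine ⟨Pi.single i 1, Pi.single i (-1), 0, 1, fun x => ?_⟩
  have hsingle : ∀ c : ℝ, ∑ k, (Pi.single i c : ι → ℝ) k * (if x k then (1 : ℝ) else 0) =
      c * if x i then 1 else 0 := fun c => by
    rw [sum_eq_single i (fun k _ hk => by simp [hk]) (by simp), Pi.single_eq_same]
  rw [hsingle, hsingle]
  cases x i <;> cases x j <;> norm_num

theorem quarter_le_mean_sq_error_affine (hij : i ≠ j) (w : ι → ℝ) (b : ℝ) :
    (1 : ℝ) / 4 ≤ (∑ x : ι → Bool, ((if x i ≠ x j then (1 : ℝ) else 0)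
      - (∑ k, w k * (if x k then (1 : ℝ) else 0) + b)) ^ 2) / 2 ^ Fintype.card ι := by
  set f : (ι → Bool) → ℝ := fun x => (if x i ≠ x j then (1 : ℝ) else 0)
      - (∑ k, w k * (if x k then (1 : ℝ) else 0) + b)
  set N : ℝ := 2 ^ Fintype.card ι
  have hcorr : ∑ x, xorSign i j x * f x = -(N / 2) := by
    simp only [f, mul_sub, sum_sub_distrib, sum_xorSign_mul_xor hij,
      sum_xorSign_mul_affine hij, sub_zero, N]
  have hcs := sum_mul_sq_le_sq_mul_sq univ (xorSign i j) f
  rw [hcorr, sum_xorSign_sq] at hcs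
  have hN : 0 < N := by positivity
  rw [le_div_iff₀ hN]
  nlinarith

open Finset in
theorem stmt_9 (d : ℕ) (hd : 2 ≤ d) :
    (∃ (w₁ w₂ : Fin d → ℝ) (b₁ b₂ : ℝ),
      ∑ x : Fin d → Bool,
        ((if x ⟨d - 2, by omega⟩ ≠ x ⟨d - 1, by omega⟩ then (1 : ℝ) else 0)
          - (if x ⟨d - 1, by omega⟩
              then ∑ i, w₂ i * (if x i then (1 : ℝ) else 0) + b₂
              else ∑ i, w₁ i * (if x i then (1 : ℝ) else 0) + b₁)) ^ 2 = 0)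
    ∧ (∀ (w : Fin d → ℝ) (b : ℝ),
        (1 : ℝ) / 4 ≤
          (∑ x : Fin d → Bool,
            ((if x ⟨d - 2, by omega⟩ ≠ x ⟨d - 1, by omega⟩ then (1 : ℝ) else 0)
              - (∑ i, w i * (if x i then (1 : ℝ) else 0) + b)) ^ 2) / 2 ^ d) := by
  have hij : (⟨d - 2, by omega⟩ : Fin d) ≠ ⟨d - 1, by omega⟩ := by
    simp only [ne_eq, Fin.mk.injEq]
    omega
  refine ⟨?_, fun w b => by simpa using quarter_le_mean_sq_error_affine hij w b⟩
  obtain ⟨w₁, w₂, b₁, b₂, hexact⟩ := exists_groupwise_affine_eq_xor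
    (⟨d - 2, by omega⟩ : Fin d) ⟨d - 1, by omega⟩
  exact ⟨w₁, w₂, b₁, b₂, sum_eq_zero fun x _ => by rw [hexact x, sub_self, sq, mul_zero]⟩
end

section
/- Let T be a binary decision tree computing a function {0,1}^d → {0,1} where each internal node branches on one input coordinate, and suppose T has at most 2^s leaves. Let y = parity of the last s+1 input bits. Under the uniform distribution on {0,1}^d, any leaf of T whose root-to-leaf path queries fewer than all s+1 relevant bits has error rate exactly 1/2 among inputs reaching it; and the total probability mass of leaves at depth ≤ s is at least 1/2 in any tree with ≤ 2^s leaves; consequently the 0-1 error of T is at least 1/4. -/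
inductive DTree (d : ℕ) where
  | leaf (b : Bool)
  | node (i : Fin d) (t₀ t₁ : DTree d)

def DTree.eval {d : ℕ} : DTree d → (Fin d → Bool) → Bool
  | .leaf b, _ => b
  | .node i t₀ t₁, x => if x i then (t₁.eval x) else (t₀.eval x)

/-- Number of leaves of a decision tree. -/
def DTree.leaves {d : ℕ} : DTree d → ℕ
  | .leaf _ => 1
  | .node _ t₀ t₁ => t₀.leaves + t₁.leaves

/-- Total probability mass (under the uniform input distribution) of leaves at depth ≤ m. -/
def DTree.shallowMass {d : ℕ} : DTree d → ℕ → ℚ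
  | .leaf _, _ => 1
  | .node _ _ _, 0 => 0
  | .node _ t₀ t₁, m + 1 => (t₀.shallowMass m + t₁.shallowMass m) / 2

/-!
Flipping a relevant bit that a partial assignment leaves free is an involution of the inputs
consistent with it which reverses the parity, so a constant leaf label is wrong on exactly half of
them. A leaf whose path fixes all `s + 1` relevant bits is reached by at most `2 ^ (d - s - 1)`
inputs, so at most `2 ^ s` such leaves cover at most half of the cube, and the tree errs on at
least half of the remaining inputs; induction on the tree, carrying the partial assignment of the
current path, gives the error bound `1 / 4`. The mass bound is the induction
`1 - leaves / 2 ^ (m + 1) ≤ shallowMass m`.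
-/

open Finset Function

lemma update_not_involutive {ι : Type*} [DecidableEq ι] (r : ι) :
    Involutive fun x : ι → Bool => update x r (!x r) := by
  intro x
  simp

lemma card_filter_eq_true_add_card_filter_eq_false {α : Type*} (S : Finset α) (g : α → Bool) :
    #(S.filter (g · = true)) + #(S.filter (g · = false)) = #S := by
  simpa only [Bool.not_eq_true] using card_filter_add_card_filter_not (s := S) (g · = true)

section Subcube

variable {ι : Type*} [Fintype ι] [DecidableEq ι]

def subcube (σ : ι → Option Bool) : Finset (ι → Bool) :=
  univ.filter fun x => ∀ i b, σ i = some b → x i = b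

@[simp]
lemma subcube_none : subcube (fun _ : ι => none) = univ := by
  simp [subcube]

lemma filter_subcube_apply_eq {σ : ι → Option Bool} {i : ι} {c : Bool} (h : σ i ≠ some !c) :
    (subcube σ).filter (· i = c) = subcube (update σ i (some c)) := by
  ext x
  simp only [subcube, mem_filter, mem_univ, true_and, update_apply]
  constructor
  · rintro ⟨hx, rfl⟩ j b hj
    split_ifs at hj with hji
    · subst hji; simpa using hj
    · exact hx j b hj
  · intro hx
    refine ⟨fun j b hj => ?_, hx i c (by simp)⟩
    by_cases hji : j = i
    · subst hji
      have := hx j c (by simp)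
      cases b <;> cases c <;> simp_all
    · exact hx j b (by simpa [hji] using hj)

lemma filter_subcube_apply_eq_empty {σ : ι → Option Bool} {i : ι} {c : Bool} (h : σ i = some !c) :
    (subcube σ).filter (· i = c) = ∅ := by
  ext x
  simp only [subcube, mem_filter, mem_univ, true_and, notMem_empty, iff_false, not_and]
  intro hx
  simp [hx i _ h]

lemma card_subcube_le {σ : ι → Option Bool} {R : Finset ι} (hR : ∀ r ∈ R, σ r ≠ none) :
    #(subcube σ) ≤ 2 ^ (Fintype.card ι - #R) := by
  have hpi : subcube σ = Fintype.piFinset fun i => (σ i).elim univ ({·}) := by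
    ext x
    simp only [subcube, mem_filter, mem_univ, true_and, Fintype.mem_piFinset]
    refine forall_congr' fun i => ?_
    cases σ i <;> simp
  calc #(subcube σ) = ∏ i, #((σ i).elim univ ({·})) := by rw [hpi, Fintype.card_piFinset]
    _ ≤ ∏ i, if i ∈ R then 1 else 2 := by
      gcongr with i
      split_ifs with hi
      · obtain ⟨b, hb⟩ := Option.ne_none_iff_exists'.mp (hR i hi)
        simp [hb]
      · cases σ i <;> simp
    _ = 2 ^ (Fintype.card ι - #R) := by
      rw [prod_ite, prod_const_one, one_mul, prod_const, filter_not, filter_mem_eq_inter,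
        univ_inter, card_sdiff_of_subset (subset_univ R), card_univ]

lemma card_filter_update_true (p : ι → Prop) [DecidablePred p] (x : ι → Bool) {r : ι}
    (hr : p r) :
    #{i | p i ∧ update x r true i = true} = #{i | p i ∧ update x r false i = true} + 1 := by
  rw [← card_insert_of_notMem (a := r) (by simp)]
  congr 1
  ext i
  by_cases hi : i = r
  · subst hi; simp [hr]
  · simp [hi]

lemma parity_update_not (p : ι → Prop) [DecidablePred p] (x : ι → Bool) {r : ι} (hr : p r) :
    (#{i | p i ∧ update x r (!x r) i = true} % 2 == 1) = !(#{i | p i ∧ x i = true} % 2 == 1) := by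
  have hsucc (a : ℕ) : ((a + 1) % 2 == 1) = !(a % 2 == 1) := by
    rcases Nat.mod_two_eq_zero_or_one a with h | h <;> simp [Nat.add_mod, h]
  have hx : update x r (x r) = x := update_eq_self r x
  cases hxr : x r <;> rw [hxr] at hx <;> simp only [Bool.not_false, Bool.not_true] <;>
    conv_rhs => rw [← hx]
  · rw [card_filter_update_true p x hr, hsucc]
  · rw [card_filter_update_true p x hr, hsucc, Bool.not_not]

lemma update_not_mem_subcube {σ : ι → Option Bool} {r : ι} (hσ : σ r = none) {x : ι → Bool}
    (hx : x ∈ subcube σ) : update x r (!x r) ∈ subcube σ := by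
  simp only [subcube, mem_filter, mem_univ, true_and, update_apply] at hx ⊢
  intro i b hi
  split_ifs with hir
  · simp_all
  · exact hx i b hi

lemma card_filter_subcube_true_eq_false {f : (ι → Bool) → Bool} {r : ι}
    (hf : ∀ x, f (update x r (!x r)) = !f x) {σ : ι → Option Bool} (hσ : σ r = none) :
    #((subcube σ).filter (f · = true)) = #((subcube σ).filter (f · = false)) := by
  refine card_nbij' (fun x => update x r (!x r)) (fun x => update x r (!x r)) ?_ ?_
    (fun x _ => update_not_involutive r x) (fun x _ => update_not_involutive r x)
  all_goals
    intro x hx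
    simp only [coe_filter, Set.mem_ofPred_eq] at hx ⊢
    simp [update_not_mem_subcube hσ hx.1, hf, hx.2]

lemma card_subcube_le_error_const {f : (ι → Bool) → Bool} {R : Finset ι} (hf : ∀ r ∈ R, ∀ x, f (update x r (!x r)) = !f x) (b : Bool)
    (σ : ι → Option Bool) :
    #(subcube σ) ≤ 2 * #((subcube σ).filter (b ≠ f ·)) + 2 ^ (Fintype.card ι - #R) := by
  by_cases hfree : ∃ r ∈ R, σ r = none
  · obtain ⟨r, hr, hσ⟩ := hfree
    have hhalf := card_filter_subcube_true_eq_false (hf r hr) hσ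
    have hsplit := card_filter_eq_true_add_card_filter_eq_false (subcube σ) f
    have herr : (subcube σ).filter (b ≠ f ·) = (subcube σ).filter (f · = !b) :=
      filter_congr fun x _ => by cases b <;> cases f x <;> simp
    rw [herr]
    cases b <;> simp only [Bool.not_false, Bool.not_true] <;> lia
  · simp only [not_exists, not_and] at hfree
    exact (card_subcube_le hfree).trans (Nat.le_add_left _ _)

end Subcube

lemma Fin.card_filter_le_val {n : ℕ} (m : ℕ) : #{i : Fin n | m ≤ (i : ℕ)} = n - m := by
  have h := card_filter_add_card_filter_not (s := (univ : Finset (Fin n))) fun i => (i : ℕ) < m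
  simp only [not_lt, Fin.card_filter_val_lt, card_univ, Fintype.card_fin] at h
  omega

namespace DTree

variable {d : ℕ}

lemma leaves_pos (T : DTree d) : 0 < T.leaves := by
  induction T with
  | leaf => simp [leaves]
  | node _ _ _ ih₀ _ => simp only [leaves]; omega

lemma one_sub_leaves_div_le_shallowMass (T : DTree d) (m : ℕ) :
    1 - (T.leaves : ℚ) / 2 ^ (m + 1) ≤ T.shallowMass m := by
  induction T generalizing m with
  | leaf => simp only [leaves, shallowMass]; linarith [show (0 : ℚ) < 1 / 2 ^ (m + 1) by positivity]
  | node i t₀ t₁ ih₀ ih₁ =>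
    cases m with
    | zero =>
      have : (2 : ℚ) ≤ t₀.leaves + t₁.leaves := by
        exact_mod_cast Nat.add_le_add t₀.leaves_pos t₁.leaves_pos
      simp only [leaves, shallowMass]
      push_cast
      linarith
    | succ m =>
      simp only [leaves, shallowMass]
      push_cast
      calc 1 - ((t₀.leaves : ℚ) + t₁.leaves) / 2 ^ (m + 1 + 1)
          = ((1 - (t₀.leaves : ℚ) / 2 ^ (m + 1)) + (1 - (t₁.leaves : ℚ) / 2 ^ (m + 1))) / 2 := by
            ring
        _ ≤ (t₀.shallowMass m + t₁.shallowMass m) / 2 := by linarith [ih₀ m, ih₁ m]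

lemma half_le_shallowMass {T : DTree d} {s : ℕ} (hT : T.leaves ≤ 2 ^ s) :
    1 / 2 ≤ T.shallowMass s := by
  have hL : (T.leaves : ℚ) / 2 ^ (s + 1) ≤ 1 / 2 := by
    rw [div_le_iff₀ (by positivity), pow_succ]
    have : (T.leaves : ℚ) ≤ 2 ^ s := by exact_mod_cast hT
    linarith
  linarith [T.one_sub_leaves_div_le_shallowMass s]

lemma card_filter_eval_node (S : Finset (Fin d → Bool)) (i : Fin d) (t₀ t₁ : DTree d)
    (f : (Fin d → Bool) → Bool) :
    #(S.filter fun x => (node i t₀ t₁).eval x ≠ f x) =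
      #(S.filter fun x => x i = true ∧ t₁.eval x ≠ f x) +
        #(S.filter fun x => x i = false ∧ t₀.eval x ≠ f x) := by
  rw [← card_union_of_disjoint (disjoint_filter.2 fun x _ h₁ h₂ => by simp_all), ← filter_or]
  congr 1
  refine filter_congr fun x _ => ?_
  cases h : x i <;> simp [eval, h]

section Error

variable {f : (Fin d → Bool) → Bool} {R : Finset (Fin d)}

lemma card_filter_subcube_apply_le {t : DTree d} {K : ℕ}
    (ht : ∀ σ, #(subcube σ) ≤ 2 * #((subcube σ).filter fun x => t.eval x ≠ f x) + K)
    (σ : Fin d → Option Bool) (i : Fin d) (c : Bool) :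
    #((subcube σ).filter (· i = c)) ≤
      2 * #((subcube σ).filter fun x => x i = c ∧ t.eval x ≠ f x) + K := by
  by_cases h : σ i = some !c
  · simp [filter_subcube_apply_eq_empty h]
  · rw [← filter_filter, filter_subcube_apply_eq h]
    exact ht _

theorem card_subcube_le_error (hf : ∀ r ∈ R, ∀ x, f (update x r (!x r)) = !f x) (T : DTree d)
    (σ : Fin d → Option Bool) :
    #(subcube σ) ≤
      2 * #((subcube σ).filter fun x => T.eval x ≠ f x) + T.leaves * 2 ^ (d - #R) := by
  induction T generalizing σ with
  | leaf b =>
    have h := card_subcube_le_error_const hf b σ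
    rw [Fintype.card_fin] at h
    rw [leaves, one_mul]
    exact h
  | node i t₀ t₁ ih₀ ih₁ =>
    have h₀ := card_filter_subcube_apply_le ih₀ σ i false
    have h₁ := card_filter_subcube_apply_le ih₁ σ i true
    have hsplit := card_filter_eq_true_add_card_filter_eq_false (subcube σ) (· i)
    rw [card_filter_eval_node, leaves, add_mul]
    omega

theorem one_div_four_le_error (hf : ∀ r ∈ R, ∀ x, f (update x r (!x r)) = !f x) {s : ℕ}
    (hR : #R = s + 1) {T : DTree d} (hT : T.leaves ≤ 2 ^ s) :
    (1 : ℚ) / 4 ≤ (#{x | T.eval x ≠ f x} : ℚ) / 2 ^ d := by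
  have hsd : s + 1 ≤ d := by simpa [hR] using card_le_univ R
  have herr := card_subcube_le_error hf T fun _ => none
  simp only [subcube_none, card_univ, Fintype.card_fun, Fintype.card_bool, Fintype.card_fin,
    hR] at herr
  have hpow : 2 ^ s * 2 ^ (d - (s + 1)) * 2 = 2 ^ d := by
    rw [← pow_add, ← pow_succ]
    congr 1
    omega
  have hleaves := Nat.mul_le_mul_right (2 ^ (d - (s + 1))) hT
  have hquarter : 2 ^ d ≤ 4 * #{x | T.eval x ≠ f x} := by linarith
  rw [le_div_iff₀ (by positivity)]
  have : (2 : ℚ) ^ d ≤ 4 * #{x | T.eval x ≠ f x} := by exact_mod_cast hquarter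
  linarith

end Error

end DTree

open Finset in
theorem stmt_10 (d s : ℕ) (hds : s + 1 ≤ d)
    (parity : (Fin d → Bool) → Bool)
    (hparity : ∀ x, parity x =
      ((univ.filter fun i : Fin d => d - (s + 1) ≤ (i : ℕ) ∧ x i = true).card % 2 == 1))
    (T : DTree d) (hT : T.leaves ≤ 2 ^ s) :
    -- (1) any partial assignment (leaf path) leaving some relevant bit unqueried has
    -- exactly half of its consistent inputs of each parity, i.e. error rate 1/2 for
    -- any constant leaf label:
    ((∀ σ : Fin d → Option Bool,
        (∃ r : Fin d, d - (s + 1) ≤ (r : ℕ) ∧ σ r = none) →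
        (univ.filter fun x : Fin d → Bool =>
            (∀ i b, σ i = some b → x i = b) ∧ parity x = true).card
          = (univ.filter fun x : Fin d → Bool =>
              (∀ i b, σ i = some b → x i = b) ∧ parity x = false).card))
    -- (2) leaves of depth ≤ s carry probability mass at least 1/2:
    ∧ (1 : ℚ) / 2 ≤ T.shallowMass s
    -- (3) consequently the 0-1 error of T against the parity target is at least 1/4:
    ∧ (1 : ℚ) / 4 ≤
        ((univ.filter fun x : Fin d → Bool => T.eval x ≠ parity x).card : ℚ) / 2 ^ d := by
  set R : Finset (Fin d) := {i | d - (s + 1) ≤ (i : ℕ)}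
  have hR : #R = s + 1 := by rw [Fin.card_filter_le_val]; omega
  have hflip : ∀ r ∈ R, ∀ x, parity (update x r (!x r)) = !parity x := fun r hr x => by
    rw [hparity, hparity]
    exact parity_update_not _ x (mem_filter.1 hr).2
  refine ⟨fun σ ⟨r, hr, hσ⟩ => ?_, T.half_le_shallowMass hT, T.one_div_four_le_error hflip hR hT⟩
  have h := card_filter_subcube_true_eq_false (hflip r (mem_filter.2 ⟨mem_univ r, hr⟩)) hσ
  simp only [subcube, filter_filter] at h
  -- the statement decides `∀ i : Fin d` by `Nat.decidableForallFin`, not through `Fintype`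
  convert h using 3
end

section
/- If the set of decoupled classifiers over class C achieves loss at least ¢ smaller than the best single classifier in C on distribution D (i.e., min over c∈C of ℓ_D(c) − min over decoupled tuples of ℓ_D(γ_c⃗) ≥ ¢), then for every c ∈ C there exists a group k and a classifier c' ∈ C with group-k loss ℓ_{D,k}(c') ≤ ℓ_{D,k}(c) − ¢. -/
theorem Finset.exists_le_of_le_weighted_sum {ι R : Type*} [Field R] [LinearOrder R]
    [IsStrictOrderedRing R] {s : Finset ι} {w f : ι → R} {a : R}
    (hw₀ : ∀ i ∈ s, 0 ≤ w i) (hw₁ : ∑ i ∈ s, w i = 1) (h : a ≤ ∑ i ∈ s, w i * f i) :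
    ∃ i ∈ s, a ≤ f i := by
  have hle := centerMass_le_sup (f := f) hw₀ (hw₁ ▸ one_pos)
  rw [centerMass_eq_of_sum_1 _ _ hw₁] at hle
  obtain ⟨i, hi, hmax⟩ := exists_mem_eq_sup' (nonempty_of_sum_ne_zero (hw₁ ▸ one_ne_zero)) f
  exact ⟨i, hi, h.trans (by simpa [hmax] using hle)⟩

open Finset in
theorem stmt_12_general {C : Type*} (K : ℕ)
    (ν : Fin K → ℝ) (hν : ∀ k, 0 ≤ ν k) (hν1 : ∑ k, ν k = 1)
    (ℓ : C → Fin K → ℝ) (ε : ℝ)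
    (hgap : ∃ cvec : Fin K → C, ∀ c : C,
      ∑ k, ν k * ℓ (cvec k) k ≤ (∑ k, ν k * ℓ c k) - ε) :
    ∀ c : C, ∃ (k : Fin K) (c' : C), ℓ c' k ≤ ℓ c k - ε := by
  intro c
  obtain ⟨cvec, hcvec⟩ := hgap
  have hgain : ε ≤ ∑ k, ν k * (ℓ c k - ℓ (cvec k) k) := by
    simp only [mul_sub, sum_sub_distrib]
    linarith [hcvec c]
  obtain ⟨k, -, hk⟩ := exists_le_of_le_weighted_sum (fun k _ ↦ hν k) hν1 hgain
  exact ⟨k, cvec k, by linarith⟩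

open Finset in
theorem stmt_12 {C : Type*} (K : ℕ) (hK : 1 ≤ K)
    (ν : Fin K → ℝ) (hν : ∀ k, 0 ≤ ν k) (hν1 : ∑ k, ν k = 1)
    (ℓ : C → Fin K → ℝ) (ε : ℝ)
    (hgap : ∃ cvec : Fin K → C, ∀ c : C,
      ∑ k, ν k * ℓ (cvec k) k ≤ (∑ k, ν k * ℓ c k) - ε) :
    ∀ c : C, ∃ (k : Fin K) (c' : C), ℓ c' k ≤ ℓ c k - ε :=
  stmt_12_general K ν hν hν1 ℓ ε hgap
end
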